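/- For all natural numbers n and j with 0 ≤ j < n/2 − 1, ((n − 2j − 2)/(j + 1)) · Σ_{i=0}^{j} C(n,i) < C(n, j+1). -/

import Mathlib

/-!
Write `S_j = ∑_{i ≤ j} C(n,i)`. By induction on `j`, `(n - 2j - 1) S_j ≤ (j + 1) C(n,j+1)`:
the step adds `C(n,j+1)` to the sum and uses `(j + 1) C(n,j+1) + (n - 2j - 3) C(n,j+1) =
(n - j - 2) C(n,j+1) = (j + 2) C(n,j+2)`; this is the geometric-series comparison with
ratio `(j + 1)/(n - j)`. Since `S_j ≥ C(n,0) = 1 > 0`, lowering the factor to `n - 2j - 2`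
makes the inequality strict.
-/

open Finset

variable {R : Type*} [CommRing R] [LinearOrder R] [IsStrictOrderedRing R]

/-- Unlike `Nat.choose_succ_right_eq`, the subtraction here is taken in `R`, so no `k ≤ n` is needed. -/
theorem Nat.cast_choose_succ_mul (n k : ℕ) :
    (n.choose (k + 1) : R) * (k + 1) = n.choose k * (n - k) := by
  rcases le_or_gt k n with hkn | hnk
  · have h := congrArg (Nat.cast : ℕ → R) (Nat.choose_succ_right_eq n k)
    push_cast [Nat.cast_sub hkn] at h
    exact h
  · simp [Nat.choose_eq_zero_of_lt hnk, Nat.choose_eq_zero_of_lt (Nat.lt_succ_of_lt hnk)]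

theorem sub_mul_sum_range_choose_le (n j : ℕ) :
    ((n : R) - 2 * j - 1) * ∑ i ∈ range (j + 1), (n.choose i : R) ≤
      (j + 1) * n.choose (j + 1) := by
  induction j with
  | zero => simp
  | succ j ih =>
    have hsum : (0 : R) ≤ ∑ i ∈ range (j + 1), (n.choose i : R) := by positivity
    have hstep := Nat.cast_choose_succ_mul (R := R) n (j + 1)
    rw [sum_range_succ]
    push_cast at hstep ⊢
    linarith

theorem sum_range_choose_pos (n j : ℕ) : (0 : R) < ∑ i ∈ range (j + 1), (n.choose i : R) := by
  rw [sum_range_succ']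
  simp only [Nat.choose_zero_right, Nat.cast_one]
  positivity

theorem stmt_18 (n j : ℕ) :
    ((n : ℝ) - 2 * j - 2) / (j + 1) * ∑ i ∈ Finset.range (j + 1), (n.choose i : ℝ) <
      (n.choose (j + 1) : ℝ) := by
  have hbound := sub_mul_sum_range_choose_le (R := ℝ) n j
  have hpos := sum_range_choose_pos (R := ℝ) n j
  rw [div_mul_eq_mul_div, div_lt_iff₀ (by positivity)]
  linarith
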